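/- Let R be a ring and n a non-negative integer. A left R-module M is n-weak injective if and only if its character module M* = Hom_ℤ(M, ℚ/ℤ) is an n-weak flat right R-module. -/

import Mathlib

/-! Definitions for `n`-weak injective and `n`-weak flat modules over an arbitrary
(associative, unital, possibly noncommutative) ring `R`, following
Amini–Amzil–Bennis, "On n-weak injective and n-weak flat modules".

Left `R`-modules are types with `[Module R M]`; right `R`-modules are types with
`[Module Rᵐᵒᵖ M]`.  `Ext` is the derived functor of the ℤ-linear Yoneda functor on
`ModuleCat R`, and `Tor` is obtained as the left derived functor of the balanced
tensor product `N ⊗_R -` (constructed as a quotient of the ℤ-tensor product). -/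

open CategoryTheory Limits TensorProduct

noncomputable section

universe u

namespace NWeak

variable (R : Type u) [Ring R]

/-- A left `R`-module `U` is *`n`-super finitely presented* if it admits a resolution
`⋯ → F_{n+1} → F_n → ⋯ → F_1 → F_0 → U → 0` by projective modules in which `F_i` is
finitely generated for every `i ≥ n`. -/
def IsNSuperFP (n : ℕ) (U : Type u) [AddCommGroup U] [Module R U] : Prop :=
  ∃ (F : ℕ → ModuleCat.{u} R) (d : ∀ i, F (i + 1) ⟶ F i) (ε : F 0 →ₗ[R] U),
    (∀ i, Module.Projective R (F i)) ∧
    (∀ i, n ≤ i → Module.Finite R (F i)) ∧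
    Function.Surjective ε ∧
    Function.Exact (d 0) ε ∧
    (∀ i, Function.Exact (d (i + 1)) (d i))

/-- A left `R`-module `K` is *special super finitely presented* (relative to `n`) if
there are an `n`-super finitely presented module `U` and a resolution
`⋯ → F_{n+1} → F_n → ⋯ → F_0 → U → 0` as above such that `K ≅ Im (F_n → F_{n-1})`,
where for `n = 0` we read `K_{-1} := U`. -/
def IsSpecialSFP (n : ℕ) (K : Type u) [AddCommGroup K] [Module R K] : Prop :=
  ∃ (F : ℕ → ModuleCat.{u} R) (d : ∀ i, F (i + 1) ⟶ F i) (U : ModuleCat.{u} R)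
    (ε : F 0 ⟶ U),
    (∀ i, Module.Projective R (F i)) ∧
    (∀ i, n ≤ i → Module.Finite R (F i)) ∧
    Function.Surjective ε ∧
    Function.Exact (d 0) ε ∧
    (∀ i, Function.Exact (d (i + 1)) (d i)) ∧
    (match n with
      | 0 => Nonempty (K ≃ₗ[R] U)
      | m + 1 => Nonempty (K ≃ₗ[R] LinearMap.range (d m).hom))

/-- Vanishing of `Ext_R^i(K, M)` for left `R`-modules. -/
def extVanish (i : ℕ) (K : Type u) [AddCommGroup K] [Module R K]
    (M : Type u) [AddCommGroup M] [Module R M] : Prop :=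
  Subsingleton (((Ext ℤ (ModuleCat.{u} R) i).obj
    (Opposite.op (ModuleCat.of R K))).obj (ModuleCat.of R M))

/-- A left `R`-module `M` is *`n`-weak injective* if `Ext_R^{n+1}(U, M) = 0` for every
`n`-super finitely presented left `R`-module `U`. -/
def IsNWeakInjective (n : ℕ) (M : Type u) [AddCommGroup M] [Module R M] : Prop :=
  ∀ (U : ModuleCat.{u} R), IsNSuperFP R n U → extVanish R (n + 1) U M

/-- The left `R`-module `M` has *`n`-weak injective dimension at most `k`* if
`Ext_R^{k+1}(K, M) = 0` for every special super finitely presented left `R`-module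
`K`. -/
def WIDimLE (n k : ℕ) (M : Type u) [AddCommGroup M] [Module R M] : Prop :=
  ∀ (K : ModuleCat.{u} R), IsSpecialSFP R n K → extVanish R (k + 1) K M

/-! ### The balanced tensor product and Tor -/

/-- The additive subgroup of `N ⊗[ℤ] K` generated by the balancing relations
`(n·r) ⊗ k - n ⊗ (r·k)`. -/
def balRel (N : Type u) [AddCommGroup N] [Module Rᵐᵒᵖ N]
    (K : Type u) [AddCommGroup K] [Module R K] : AddSubgroup (N ⊗[ℤ] K) :=
  AddSubgroup.closure
    {x | ∃ (a : N) (r : R) (b : K),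
      x = (MulOpposite.op r • a) ⊗ₜ[ℤ] b - a ⊗ₜ[ℤ] (r • b)}

/-- The balanced tensor product `N ⊗_R K` of a right `R`-module `N` and a left
`R`-module `K`, realized as a quotient of `N ⊗[ℤ] K`. -/
def RTensor (N : Type u) [AddCommGroup N] [Module Rᵐᵒᵖ N]
    (K : Type u) [AddCommGroup K] [Module R K] : Type u :=
  (N ⊗[ℤ] K) ⧸ balRel R N K

instance (N : Type u) [AddCommGroup N] [Module Rᵐᵒᵖ N]
    (K : Type u) [AddCommGroup K] [Module R K] : AddCommGroup (RTensor R N K) :=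
  inferInstanceAs (AddCommGroup ((N ⊗[ℤ] K) ⧸ balRel R N K))

variable {R}

/-- Functoriality of the balanced tensor product in the left-module variable. -/
def balMapRight (N : Type u) [AddCommGroup N] [Module Rᵐᵒᵖ N]
    {K K' : Type u} [AddCommGroup K] [Module R K] [AddCommGroup K'] [Module R K']
    (f : K →ₗ[R] K') : RTensor R N K →+ RTensor R N K' :=
  QuotientAddGroup.map _ _
    (TensorProduct.map (LinearMap.id : N →ₗ[ℤ] N) (f.restrictScalars ℤ)).toAddMonoidHom
    (by
      rw [balRel, AddSubgroup.closure_le]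
      rintro x ⟨a, r, b, rfl⟩
      simp only [SetLike.mem_coe, AddSubgroup.mem_comap, LinearMap.toAddMonoidHom_coe,
        map_sub, TensorProduct.map_tmul, LinearMap.coe_restrictScalars, LinearMap.id_coe,
        id_eq, LinearMap.map_smul]
      exact AddSubgroup.subset_closure ⟨a, r, f b, rfl⟩)

/-- Functoriality of the balanced tensor product in the right-module variable. -/
def balMapLeft (K : Type u) [AddCommGroup K] [Module R K]
    {N N' : Type u} [AddCommGroup N] [Module Rᵐᵒᵖ N] [AddCommGroup N'] [Module Rᵐᵒᵖ N']
    (g : N →ₗ[Rᵐᵒᵖ] N') : RTensor R N K →+ RTensor R N' K :=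
  QuotientAddGroup.map _ _
    (TensorProduct.map (g.restrictScalars ℤ) (LinearMap.id : K →ₗ[ℤ] K)).toAddMonoidHom
    (by
      rw [balRel, AddSubgroup.closure_le]
      rintro x ⟨a, r, b, rfl⟩
      simp only [SetLike.mem_coe, AddSubgroup.mem_comap, LinearMap.toAddMonoidHom_coe,
        map_sub, TensorProduct.map_tmul, LinearMap.coe_restrictScalars, LinearMap.id_coe,
        id_eq, LinearMap.map_smul]
      exact AddSubgroup.subset_closure ⟨g a, r, b, rfl⟩)

lemma balMapRight_mk (N : Type u) [AddCommGroup N] [Module Rᵐᵒᵖ N]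
    {K K' : Type u} [AddCommGroup K] [Module R K] [AddCommGroup K'] [Module R K']
    (f : K →ₗ[R] K') (y : N ⊗[ℤ] K) :
    balMapRight N f (QuotientAddGroup.mk y)
      = QuotientAddGroup.mk (TensorProduct.map (LinearMap.id : N →ₗ[ℤ] N)
          (f.restrictScalars ℤ) y) := rfl

variable (R)

/-- The functor `K ↦ N ⊗_R K` from left `R`-modules to abelian groups, for a fixed
right `R`-module `N`. -/
def tensorFunctor (N : Type u) [AddCommGroup N] [Module Rᵐᵒᵖ N] :
    ModuleCat.{u} R ⥤ AddCommGrpCat.{u} where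
  obj K := AddCommGrpCat.of (RTensor R N K)
  map {K K'} f := AddCommGrpCat.ofHom (balMapRight N f.hom)
  map_id K := by
    refine AddCommGrpCat.ext fun x => ?_
    refine QuotientAddGroup.induction_on x fun y => ?_
    show balMapRight N (LinearMap.id) (QuotientAddGroup.mk y) = QuotientAddGroup.mk y
    rw [balMapRight_mk]
    congr 1
    refine TensorProduct.induction_on y (by simp) (fun a b => by simp) ?_
    intro s t hs ht
    simp_all [map_add]
  map_comp {K K' K''} f g := by
    refine AddCommGrpCat.ext fun x => ?_
    refine QuotientAddGroup.induction_on x fun y => ?_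
    show balMapRight N (g.hom.comp f.hom) (QuotientAddGroup.mk y)
      = balMapRight N g.hom (balMapRight N f.hom (QuotientAddGroup.mk y))
    rw [balMapRight_mk, balMapRight_mk, balMapRight_mk]
    congr 1
    refine TensorProduct.induction_on y (by simp) (fun a b => by simp) ?_
    intro s t hs ht
    simp_all [map_add]

instance (N : Type u) [AddCommGroup N] [Module Rᵐᵒᵖ N] : (tensorFunctor R N).Additive where
  map_add {K K'} {f g} := by
    refine AddCommGrpCat.ext fun x => ?_
    refine QuotientAddGroup.induction_on x fun y => ?_
    show balMapRight N (f + g).hom (QuotientAddGroup.mk y)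
      = balMapRight N f.hom (QuotientAddGroup.mk y) + balMapRight N g.hom (QuotientAddGroup.mk y)
    rw [balMapRight_mk, balMapRight_mk, balMapRight_mk]
    refine (congrArg (QuotientAddGroup.mk (s := balRel R N K')) ?_).trans
      (QuotientAddGroup.mk_add ..)
    refine TensorProduct.induction_on y (by simp)
      (fun a b => by
        simp only [TensorProduct.map_tmul, LinearMap.coe_restrictScalars, LinearMap.id_coe, id_eq]
        rw [show (f + g) b = f b + g b from rfl, TensorProduct.tmul_add]) ?_
    intro s t hs ht
    simp_all [map_add]
    abel

/-- Vanishing of `Tor_i^R(N, K)` for a right `R`-module `N` and a left `R`-module `K`: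
the `i`-th left derived functor of `N ⊗_R -` vanishes at `K`. -/
def torVanish (i : ℕ) (N : Type u) [AddCommGroup N] [Module Rᵐᵒᵖ N]
    (K : Type u) [AddCommGroup K] [Module R K] : Prop :=
  Subsingleton (((tensorFunctor R N).leftDerived i).obj (ModuleCat.of R K))

/-- A right `R`-module `N` is *`n`-weak flat* if `Tor^R_{n+1}(N, U) = 0` for every
`n`-super finitely presented left `R`-module `U`. -/
def IsNWeakFlat (n : ℕ) (N : Type u) [AddCommGroup N] [Module Rᵐᵒᵖ N] : Prop :=
  ∀ (U : ModuleCat.{u} R), IsNSuperFP R n U → torVanish R (n + 1) N U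

/-- The right `R`-module `N` has *`n`-weak flat dimension at most `k`* if
`Tor^R_{k+1}(N, K) = 0` for every special super finitely presented left `R`-module
`K`. -/
def WFDimLE (n k : ℕ) (N : Type u) [AddCommGroup N] [Module Rᵐᵒᵖ N] : Prop :=
  ∀ (K : ModuleCat.{u} R), IsSpecialSFP R n K → torVanish R (k + 1) N K

/-! ### Character modules -/

/-- The character module `M⋆ = Hom_ℤ(M, ℚ/ℤ)` of a left `R`-module is a right
`R`-module via `(f · r) (m) = f (r · m)`. -/
instance charModuleRight (M : Type u) [AddCommGroup M] [Module R M] :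
    Module Rᵐᵒᵖ (CharacterModule M) where
  smul ρ f := f.comp (DistribMulAction.toAddMonoidHom M ρ.unop)
  one_smul f := CharacterModule.ext _ fun m => congrArg f (one_smul R m)
  mul_smul ρ σ f := CharacterModule.ext _ fun m => congrArg f (mul_smul σ.unop ρ.unop m)
  smul_zero ρ := CharacterModule.ext _ fun _ => rfl
  smul_add ρ f g := CharacterModule.ext _ fun _ => rfl
  add_smul ρ σ f := CharacterModule.ext _ fun m => by
    show f ((ρ.unop + σ.unop) • m) = f (ρ.unop • m) + f (σ.unop • m)
    rw [add_smul, map_add]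
  zero_smul f := CharacterModule.ext _ fun m => by
    show f ((0 : R) • m) = 0
    rw [zero_smul, map_zero]

/-- The character module `N⋆ = Hom_ℤ(N, ℚ/ℤ)` of a right `R`-module is a left
`R`-module via `(r · f) (m) = f (m · r)`. -/
instance charModuleLeft (N : Type u) [AddCommGroup N] [Module Rᵐᵒᵖ N] :
    Module R (CharacterModule N) where
  smul r f := f.comp (DistribMulAction.toAddMonoidHom N (MulOpposite.op r))
  one_smul f := CharacterModule.ext _ fun m => congrArg f (one_smul Rᵐᵒᵖ m)
  mul_smul r s f := CharacterModule.ext _ fun m => congrArg f (by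
    show (MulOpposite.op (r * s)) • m = (MulOpposite.op s) • (MulOpposite.op r) • m
    rw [← mul_smul, MulOpposite.op_mul])
  smul_zero r := CharacterModule.ext _ fun _ => rfl
  smul_add r f g := CharacterModule.ext _ fun _ => rfl
  add_smul r s f := CharacterModule.ext _ fun m => by
    show f ((MulOpposite.op r + MulOpposite.op s) • m)
      = f ((MulOpposite.op r) • m) + f ((MulOpposite.op s) • m)
    rw [add_smul, map_add]
  zero_smul f := CharacterModule.ext _ fun m => by
    show f ((0 : Rᵐᵒᵖ) • m) = 0
    rw [zero_smul, map_zero]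

/-! ### Purity and flatness -/

/-- A submodule `N` of a left `R`-module `M` is *pure* if for every right `R`-module
`L` the induced map `L ⊗_R N → L ⊗_R M` is injective. -/
def IsPureSubmodule (M : Type u) [AddCommGroup M] [Module R M] (N : Submodule R M) :
    Prop :=
  ∀ (L : Type u) [AddCommGroup L] [Module Rᵐᵒᵖ L],
    Function.Injective (balMapRight L N.subtype)

/-- A submodule `N` of a right `R`-module `M` is *pure* if for every left `R`-module
`L` the induced map `N ⊗_R L → M ⊗_R L` is injective. -/
def IsPureSubmoduleRight (M : Type u) [AddCommGroup M] [Module Rᵐᵒᵖ M]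
    (N : Submodule Rᵐᵒᵖ M) : Prop :=
  ∀ (L : Type u) [AddCommGroup L] [Module R L],
    Function.Injective (balMapLeft L N.subtype)

/-- A left `R`-module `M` is *flat* if tensoring with `M` preserves injectivity of
maps of right `R`-modules. -/
def IsFlatLeft (M : Type u) [AddCommGroup M] [Module R M] : Prop :=
  ∀ (A B : Type u) [AddCommGroup A] [Module Rᵐᵒᵖ A] [AddCommGroup B] [Module Rᵐᵒᵖ B]
    (g : A →ₗ[Rᵐᵒᵖ] B), Function.Injective g → Function.Injective (balMapLeft M g)

/-- The left `R`-module `K` has *projective dimension at most `m`*: there is an exact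
sequence `0 → P_m → ⋯ → P_1 → P_0 → K → 0` with all `P_i` projective (encoded by a
projective resolution vanishing in degrees `> m`). -/
def ProjDimLE (K : Type u) [AddCommGroup K] [Module R K] (m : ℕ) : Prop :=
  ∃ (P : ℕ → ModuleCat.{u} R) (d : ∀ i, P (i + 1) ⟶ P i) (ε : P 0 →ₗ[R] K),
    (∀ i, Module.Projective R (P i)) ∧
    Function.Surjective ε ∧
    Function.Exact (d 0) ε ∧
    (∀ i, Function.Exact (d (i + 1)) (d i)) ∧
    (∀ i, m < i → Subsingleton (P i))

end NWeak

/-! Fix an `n`-super finitely presented `U` with its resolution `F`. By the resolution,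
`Ext^{n+1}(U, M)` vanishes iff `Hom(F_n, M) → Hom(F_{n+1}, M) → Hom(F_{n+2}, M)` is exact,
and `Tor_{n+1}(M⋆, U)` vanishes iff `M⋆ ⊗ F_{n+2} → M⋆ ⊗ F_{n+1} → M⋆ ⊗ F_n` is exact.
Since `ℚ/ℤ` is an injective cogenerator, the first sequence is exact iff its character dual is,
and for a finitely generated projective `P` the natural map `M⋆ ⊗_R P → Hom_R(P, M)⋆` is an
isomorphism (check it on a finite dual basis). The modules `F_n, F_{n+1}, F_{n+2}` are finitely
generated projective, so the dual of the `Hom` sequence is isomorphic to the tensor sequence. -/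

namespace CharacterModule

variable {A B C : Type*} [AddCommGroup A] [AddCommGroup B] [AddCommGroup C]

def dualHom (f : A →+ B) : CharacterModule B →+ CharacterModule A where
  toFun c := (c : B →+ AddCircle (1 : ℚ)).comp f
  map_zero' := rfl
  map_add' _ _ := rfl

-- `ℚ/ℤ` is a cogenerator (used for `→`) and injective (used for `←`).
lemma exact_dualHom_iff {f : A →+ B} {g : B →+ C} :
    Function.Exact (dualHom g) (dualHom f) ↔ Function.Exact f g := by
  refine ⟨fun h b => ⟨fun hb => ?_, ?_⟩, fun h c => ⟨fun hc => ?_, ?_⟩⟩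
  · by_contra hb'
    have hne : (QuotientAddGroup.mk b : B ⧸ f.range) ≠ 0 := by
      rwa [Ne, QuotientAddGroup.eq_zero_iff]
    obtain ⟨χ, hχ⟩ := exists_character_apply_ne_zero_of_ne_zero hne
    obtain ⟨d, hd⟩ := (h ((χ : B ⧸ f.range →+ _).comp (QuotientAddGroup.mk' f.range))).1 <|
      ext _ fun a => by
        show χ (QuotientAddGroup.mk (f a)) = 0
        rw [(QuotientAddGroup.eq_zero_iff _).2 (AddMonoidHom.mem_range.2 ⟨a, rfl⟩), map_zero]
    have hdb : d (g b) = χ (QuotientAddGroup.mk b) := DFunLike.congr_fun hd b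
    exact hχ (by rw [← hdb, hb, map_zero])
  · rintro ⟨a, rfl⟩
    refine eq_zero_of_character_apply fun c => ?_
    exact DFunLike.congr_fun ((h (dualHom g c)).2 ⟨c, rfl⟩) a
  · have hker : g.ker ≤ (c : B →+ AddCircle (1 : ℚ)).ker := fun b hb => by
      obtain ⟨a, rfl⟩ := (h b).1 hb
      exact DFunLike.congr_fun hc a
    let c' : CharacterModule g.range := (QuotientAddGroup.lift g.ker _ hker).comp
      (QuotientAddGroup.quotientKerEquivRange g).symm.toAddMonoidHom
    obtain ⟨d, hd⟩ :=
      dual_surjective_of_injective g.range.subtype.toIntLinearMap Subtype.val_injective c'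
    refine ⟨d, ext _ fun b => ?_⟩
    have hsymm : (QuotientAddGroup.quotientKerEquivRange g).symm ⟨g b, b, rfl⟩ = b :=
      (AddEquiv.symm_apply_eq _).2 rfl
    calc d (g b) = c' ⟨g b, b, rfl⟩ := DFunLike.congr_fun hd ⟨g b, b, rfl⟩
      _ = c b := by
        show QuotientAddGroup.lift g.ker _ hker ((QuotientAddGroup.quotientKerEquivRange g).symm
          ⟨g b, b, rfl⟩) = c b
        rw [hsymm]
        rfl
  · rintro ⟨d, rfl⟩
    refine ext _ fun a => ?_
    show d (g (f a)) = 0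
    rw [h.apply_apply_eq_zero, map_zero]

end CharacterModule

lemma Module.Finite.exists_dual_basis_of_projective (R P : Type*) [Semiring R] [AddCommMonoid P]
    [Module R P] [Module.Finite R P] [Module.Projective R P] :
    ∃ (k : ℕ) (x : Fin k → P) (χ : Fin k → P →ₗ[R] R), ∀ p, ∑ j, χ j p • x j = p := by
  obtain ⟨k, π, σ, -, -, hπσ⟩ := exists_comp_eq_id_of_projective R P
  refine ⟨k, fun j => π (Pi.single j 1), fun j => (LinearMap.proj j).comp σ, fun p => ?_⟩
  calc ∑ j, σ p j • π (Pi.single j 1) = π (∑ j, Pi.single j (σ p j)) := by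
        rw [map_sum]
        refine Finset.sum_congr rfl fun j _ => ?_
        rw [← map_smul, ← Pi.single_smul', smul_eq_mul, mul_one]
    _ = p := by rw [Finset.univ_sum_single]; exact LinearMap.congr_fun hπσ p

namespace CategoryTheory.ProjectiveResolution

variable {C : Type*} [Category C] [Abelian C] {X : C} (P : ProjectiveResolution X)

lemma subsingleton_leftDerived_succ_iff [HasProjectiveResolutions C] (T : C ⥤ AddCommGrpCat)
    [T.Additive] (n : ℕ) :
    Subsingleton ((T.leftDerived (n + 1)).obj X) ↔
      Function.Exact (T.map (P.complex.d (n + 2) (n + 1))) (T.map (P.complex.d (n + 1) n)) := by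
  rw [← AddCommGrpCat.isZero_iff_subsingleton, (P.isoLeftDerivedObj T (n + 1)).isZero_iff,
    HomologicalComplex.homologyFunctor_obj, ← HomologicalComplex.exactAt_iff_isZero_homology,
    HomologicalComplex.exactAt_iff' _ (n + 2) (n + 1) n (by simp) (by simp),
    ShortComplex.ab_exact_iff_function_exact]
  rfl

lemma subsingleton_ext_succ_iff [Linear ℤ C] [EnoughProjectives C] (Y : C) (n : ℕ) :
    Subsingleton (((Ext ℤ C (n + 1)).obj (Opposite.op X)).obj Y) ↔
      Function.Exact ((P.complex.linearYonedaObj ℤ Y).d n (n + 1))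
        ((P.complex.linearYonedaObj ℤ Y).d (n + 1) (n + 2)) := by
  rw [← ModuleCat.isZero_iff_subsingleton, (P.isoExt (n + 1) Y).isZero_iff,
    ← HomologicalComplex.exactAt_iff_isZero_homology,
    HomologicalComplex.exactAt_iff' _ n (n + 1) (n + 2) (by simp) (by simp),
    ShortComplex.moduleCat_exact_iff_range_eq_ker, LinearMap.exact_iff, eq_comm]
  rfl

end CategoryTheory.ProjectiveResolution

namespace NWeak

open CharacterModule

namespace RTensor

variable {R : Type u} [Ring R] {N : Type u} [AddCommGroup N] [Module Rᵐᵒᵖ N]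
  {K : Type u} [AddCommGroup K] [Module R K]

def mk : N ⊗[ℤ] K →+ RTensor R N K := QuotientAddGroup.mk' _

lemma mk_op_smul_tmul (a : N) (r : R) (b : K) :
    mk ((MulOpposite.op r • a) ⊗ₜ[ℤ] b) = (mk (a ⊗ₜ[ℤ] (r • b)) : RTensor R N K) :=
  QuotientAddGroup.eq_iff_sub_mem.2 (AddSubgroup.subset_closure ⟨a, r, b, rfl⟩)

@[ext] lemma addMonoidHom_ext {A : Type*} [AddCommGroup A] {f g : RTensor R N K →+ A}
    (h : ∀ a b, f (mk (a ⊗ₜ[ℤ] b)) = g (mk (a ⊗ₜ[ℤ] b))) : f = g :=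
  QuotientAddGroup.addMonoidHom_ext _ <| AddMonoidHom.toIntLinearMap_injective <|
    TensorProduct.ext' h

end RTensor

variable {R : Type u} [Ring R] {M : Type u} [AddCommGroup M] [Module R M]

section CharTensor

variable {P P' : Type u} [AddCommGroup P] [Module R P] [AddCommGroup P'] [Module R P']

variable (M) in
def precompHom (ψ : P →ₗ[R] P') : (P' →ₗ[R] M) →+ (P →ₗ[R] M) :=
  (LinearMap.lcomp ℤ M ψ).toAddMonoidHom

variable (R M P) in
def charTensorPairing : CharacterModule M →+ P →+ CharacterModule (P →ₗ[R] M) where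
  toFun f :=
    { toFun p := (f : M →+ AddCircle (1 : ℚ)).comp (LinearMap.applyₗ' ℤ p).toAddMonoidHom
      map_zero' := ext _ fun φ => show f (φ 0) = 0 by rw [map_zero, map_zero]
      map_add' p q := ext _ fun φ =>
        show f (φ (p + q)) = f (φ p) + f (φ q) by rw [map_add, map_add] }
  map_zero' := rfl
  map_add' _ _ := rfl

variable (R M P) in
/-- `f ⊗ p ↦ (φ ↦ f (φ p))`. -/
def charTensorToCharHom : RTensor R (CharacterModule M) P →+ CharacterModule (P →ₗ[R] M) :=
  QuotientAddGroup.lift _ (TensorProduct.liftAddHom (charTensorPairing R M P) fun _ _ _ => by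
      ext; simp) <| by
    rw [balRel, AddSubgroup.closure_le]
    rintro _ ⟨f, r, p, rfl⟩
    refine AddMonoidHom.mem_ker.2 (ext _ fun φ => ?_)
    rw [map_sub, TensorProduct.liftAddHom_tmul, TensorProduct.liftAddHom_tmul]
    show f (r • φ p) - f (φ (r • p)) = 0
    rw [φ.map_smul, sub_self]

lemma charTensorToCharHom_naturality (ψ : P →ₗ[R] P') :
    (charTensorToCharHom R M P').comp (balMapRight _ ψ) =
      (dualHom (precompHom M ψ)).comp (charTensorToCharHom R M P) :=
  RTensor.addMonoidHom_ext fun _ _ => ext _ fun _ => rfl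

variable (M) in
def smulRightHom (χ : P →ₗ[R] R) : M →+ (P →ₗ[R] M) where
  toFun := LinearMap.smulRight (S := R) χ
  map_zero' := by ext; simp
  map_add' _ _ := by ext; simp [smul_add]

lemma charTensorToCharHom_bijective [Module.Finite R P] [Module.Projective R P] :
    Function.Bijective (charTensorToCharHom R M P) := by
  obtain ⟨k, x, χ, hxχ⟩ := Module.Finite.exists_dual_basis_of_projective R P
  let inv : CharacterModule (P →ₗ[R] M) →+ RTensor R (CharacterModule M) P :=
    ∑ j, RTensor.mk.comp
      ((((TensorProduct.mk ℤ _ P).flip (x j)).toAddMonoidHom).comp (dualHom (smulRightHom M (χ j))))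
  have hinv : ∀ c, inv c = ∑ j, RTensor.mk ((dualHom (smulRightHom M (χ j)) c) ⊗ₜ[ℤ] x j) := by
    intro c
    rw [AddMonoidHom.finsetSum_apply]
    rfl
  have hleft : inv.comp (charTensorToCharHom R M P) = AddMonoidHom.id _ := by
    ext f p
    have hcoef : ∀ j, dualHom (smulRightHom M (χ j)) (charTensorToCharHom R M P
        (RTensor.mk (f ⊗ₜ[ℤ] p))) = MulOpposite.op (χ j p) • f :=
      fun j => ext _ fun m => rfl
    simp only [AddMonoidHom.comp_apply, hinv, hcoef, RTensor.mk_op_smul_tmul, ← map_sum,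
      ← TensorProduct.tmul_sum, hxχ, AddMonoidHom.id_apply]
  have hφ : ∀ φ : P →ₗ[R] M, ∑ j, smulRightHom M (χ j) (φ (x j)) = φ := fun φ =>
    LinearMap.ext fun p => by
      simp only [LinearMap.sum_apply, smulRightHom, AddMonoidHom.coe_mk, ZeroHom.coe_mk,
        LinearMap.smulRight_apply, ← map_smul, ← map_sum, hxχ]
  refine Function.bijective_iff_has_inverse.2 ⟨inv, DFunLike.congr_fun hleft, fun c => ?_⟩
  refine ext _ fun φ => ?_
  rw [hinv, map_sum]
  calc (∑ j, charTensorToCharHom R M P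
          (RTensor.mk (dualHom (smulRightHom M (χ j)) c ⊗ₜ[ℤ] x j))) φ
      = ∑ j, c (smulRightHom M (χ j) (φ (x j))) := AddMonoidHom.finsetSum_apply _ _ _
    _ = c φ := by rw [← map_sum, hφ]

end CharTensor

lemma subsingleton_ext_succ_iff_exact_precompHom {X : ModuleCat.{u} R}
    (P : ProjectiveResolution X) (n : ℕ) :
    Subsingleton (((Ext ℤ (ModuleCat.{u} R) (n + 1)).obj (Opposite.op X)).obj
        (ModuleCat.of R M)) ↔
      Function.Exact (precompHom M (P.complex.d (n + 1) n).hom)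
        (precompHom M (P.complex.d (n + 2) (n + 1)).hom) := by
  rw [P.subsingleton_ext_succ_iff]
  exact (Function.Exact.iff_of_ladder_addEquiv
    (f₁₂ := ((P.complex.linearYonedaObj ℤ _).d n (n + 1)).hom.toAddMonoidHom)
    (f₂₃ := ((P.complex.linearYonedaObj ℤ _).d (n + 1) (n + 2)).hom.toAddMonoidHom)
    ModuleCat.homAddEquiv ModuleCat.homAddEquiv ModuleCat.homAddEquiv rfl rfl).symm

section Resolution

variable {F : ℕ → ModuleCat.{u} R} {d : ∀ i, F (i + 1) ⟶ F i}

variable (d) in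
def resolutionComplex (hd : ∀ i, Function.Exact (d (i + 1)) (d i)) :
    ChainComplex (ModuleCat.{u} R) ℕ :=
  ChainComplex.of F d fun i => ModuleCat.hom_ext (LinearMap.ext (hd i).apply_apply_eq_zero)

lemma resolutionComplex_d (hd : ∀ i, Function.Exact (d (i + 1)) (d i)) (i : ℕ) :
    (resolutionComplex d hd).d (i + 1) i = d i :=
  ChainComplex.of_d F d i

def projectiveResolutionOfExact {U : ModuleCat.{u} R} {ε : F 0 →ₗ[R] U}
    (hproj : ∀ i, Module.Projective R (F i)) (hε : Function.Surjective ε)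
    (hε0 : Function.Exact (d 0) ε) (hd : ∀ i, Function.Exact (d (i + 1)) (d i)) :
    ProjectiveResolution U where
  complex := resolutionComplex d hd
  projective i := (IsProjective.iff_projective (F i)).1 (hproj i)
  π := (ChainComplex.toSingle₀Equiv _ U).symm ⟨ModuleCat.ofHom ε, by
    rw [resolutionComplex_d]
    exact ModuleCat.hom_ext (LinearMap.ext hε0.apply_apply_eq_zero)⟩
  quasiIso := ⟨fun i => by
    cases i with
    | zero =>
      rw [ChainComplex.quasiIsoAt₀_iff, ShortComplex.quasiIso_iff_of_zeros']
      · refine ⟨?_, (ModuleCat.epi_iff_surjective _).2 hε⟩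
        rw [ShortComplex.moduleCat_exact_iff_range_eq_ker, eq_comm, ← LinearMap.exact_iff]
        show Function.Exact ((resolutionComplex d hd).d 1 0) ε
        rw [resolutionComplex_d]
        exact hε0
      all_goals rfl
    | succ i =>
      rw [quasiIsoAt_iff_exactAt' _ _ (ChainComplex.exactAt_succ_single_obj _ _),
        HomologicalComplex.exactAt_iff' _ (i + 2) (i + 1) i (by simp) (by simp),
        ShortComplex.moduleCat_exact_iff_range_eq_ker, eq_comm, ← LinearMap.exact_iff]
      show Function.Exact ((resolutionComplex d hd).d (i + 2) (i + 1))
        ((resolutionComplex d hd).d (i + 1) i)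
      rw [resolutionComplex_d, resolutionComplex_d]
      exact hd i⟩

end Resolution

lemma extVanish_succ_iff_torVanish_succ_characterModule {n : ℕ} {U : ModuleCat.{u} R}
    (hU : IsNSuperFP R n U) :
    extVanish R (n + 1) U M ↔ torVanish R (n + 1) (CharacterModule M) U := by
  obtain ⟨F, d, ε, hproj, hfin, hε, hε0, hd⟩ := hU
  have := hfin n le_rfl
  have := hfin (n + 1) (by omega)
  have := hfin (n + 2) (by omega)
  let P := projectiveResolutionOfExact hproj hε hε0 hd
  have hPd : ∀ i, P.complex.d (i + 1) i = d i := resolutionComplex_d hd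
  rw [extVanish, torVanish, subsingleton_ext_succ_iff_exact_precompHom P,
    P.subsingleton_leftDerived_succ_iff, hPd, hPd, ← exact_dualHom_iff]
  exact Function.Exact.iff_of_ladder_addEquiv
    (AddEquiv.ofBijective (charTensorToCharHom R M (F (n + 2))) charTensorToCharHom_bijective)
    (AddEquiv.ofBijective (charTensorToCharHom R M (F (n + 1))) charTensorToCharHom_bijective)
    (AddEquiv.ofBijective (charTensorToCharHom R M (F n)) charTensorToCharHom_bijective)
    (charTensorToCharHom_naturality _).symm (charTensorToCharHom_naturality _).symm

end NWeak

open NWeak in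
/-- A left `R`-module `M` is `n`-weak injective if and only if its
character module `M⋆ = Hom_ℤ(M, ℚ/ℤ)` is an `n`-weak flat right `R`-module. -/
theorem isNWeakInjective_iff_isNWeakFlat_characterModule
    (R : Type u) [Ring R] (n : ℕ) (M : Type u) [AddCommGroup M] [Module R M] :
    IsNWeakInjective R n M ↔ IsNWeakFlat R n (CharacterModule M) :=
  forall_congr' fun _ => forall_congr' extVanish_succ_iff_torVanish_succ_characterModule
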